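/- There exists a universal constant c such that for every positive integer k, every function f from positive integers to positive integers, and every graph G obtained from the ringed tree RT(k) (with n = 2^k − 1 vertices) by adding arbitrary extra edges, each joining two vertices u,v at the same level with d_R(u,v) ≤ f(n), one has δ(G) ≤ c·max(1, log f(n)). -/

import Mathlib

/-- The Gromov four-point quantity `δ(u,v,w,x)`: with the three pairings of the
four vertices sorted, half the difference between the largest and the second
largest pair-sum of graph distances. -/
noncomputable def deltaFour {V : Type*} (G : SimpleGraph V) (u v w x : V) : ℝ :=
  let a : ℝ := (G.dist u v : ℝ) + (G.dist w x : ℝ)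
  let b : ℝ := (G.dist u x : ℝ) + (G.dist v w : ℝ)
  let c : ℝ := (G.dist u w : ℝ) + (G.dist v x : ℝ)
  (2 * max a (max b c) + min a (min b c) - (a + b + c)) / 2

/-- The hyperbolicity `δ(G)` of a graph: the supremum of `δ(u,v,w,x)` over all
quadruples of vertices. -/
noncomputable def hyperbolicity {V : Type*} (G : SimpleGraph V) : ℝ :=
  ⨆ u, ⨆ v, ⨆ w, ⨆ x, deltaFour G u v w x

/-- Vertex set of the ringed tree with `k` levels: level `i` (for `i < k`) consists of the
integers `{0, …, 2^i - 1}`. -/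
abbrev RTV (k : ℕ) : Type := Σ i : Fin k, Fin (2 ^ (i : ℕ))

/-- Tree adjacency: each vertex `σ` at level `i` is joined to its children `2σ` and `2σ+1`
at level `i+1`. -/
def treeAdj {k : ℕ} (u v : RTV k) : Prop :=
  ((u.1 : ℕ) + 1 = (v.1 : ℕ) ∧ ((v.2 : ℕ) = 2 * (u.2 : ℕ) ∨ (v.2 : ℕ) = 2 * (u.2 : ℕ) + 1)) ∨
  ((v.1 : ℕ) + 1 = (u.1 : ℕ) ∧ ((u.2 : ℕ) = 2 * (v.2 : ℕ) ∨ (u.2 : ℕ) = 2 * (v.2 : ℕ) + 1))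

/-- Ring adjacency: at each level `i ≥ 1`, `m` is joined to `m + 1 (mod 2^i)`. -/
def ringAdj {k : ℕ} (u v : RTV k) : Prop :=
  (u.1 : ℕ) = (v.1 : ℕ) ∧ 1 ≤ (u.1 : ℕ) ∧
    ((v.2 : ℕ) = ((u.2 : ℕ) + 1) % 2 ^ (u.1 : ℕ) ∨ (u.2 : ℕ) = ((v.2 : ℕ) + 1) % 2 ^ (v.1 : ℕ))

lemma ringAdj_no_loop {i m : ℕ} (hm : m < 2 ^ i) (hi : 1 ≤ i) : m ≠ (m + 1) % 2 ^ i := by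
  have h2 : 2 ≤ 2 ^ i := by
    calc 2 = 2 ^ 1 := by norm_num
    _ ≤ 2 ^ i := Nat.pow_le_pow_right (by norm_num) hi
  intro h
  rcases Nat.lt_or_ge (m + 1) (2 ^ i) with hlt | hge
  · rw [Nat.mod_eq_of_lt hlt] at h; omega
  · have he : m + 1 = 2 ^ i := by omega
    rw [he, Nat.mod_self] at h; omega

/-- The ringed tree `RT(k)`: the fully binary tree with `k` levels, with the vertices of each
level `i ≥ 1` additionally connected into a ring. -/
def ringedTree (k : ℕ) : SimpleGraph (RTV k) where
  Adj u v := treeAdj u v ∨ ringAdj u v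
  symm := by
    constructor
    rintro u v (h | ⟨h1, h2, h3⟩)
    · exact Or.inl (Or.symm h)
    · exact Or.inr ⟨h1.symm, h1 ▸ h2, Or.symm h3⟩
  loopless := by
    constructor
    rintro u ((⟨h1, _⟩ | ⟨h1, _⟩) | ⟨_, h2, (h3 | h3)⟩)
    · omega
    · omega
    · exact ringAdj_no_loop u.2.isLt h2 h3
    · exact ringAdj_no_loop u.2.isLt h2 h3

/-- Cyclic distance on a ring with `N` vertices: `min(|a-b|, N - |a-b|)`. -/
def cycDist (N a b : ℕ) : ℕ := min (Nat.dist a b) (N - Nat.dist a b)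

/-- Ring distance `d_R(u,v)` of two vertices of a ringed tree on the same level. -/
def rtRingDist {k : ℕ} (u v : RTV k) : ℕ := cycDist (2 ^ (u.1 : ℕ)) (u.2 : ℕ) (v.2 : ℕ)

/-- The parent of a vertex `m` at level `i ≥ 1` is `⌊m/2⌋` at level `i - 1`. -/
def rtParent {k : ℕ} (u : RTV k) (h : 1 ≤ (u.1 : ℕ)) : RTV k :=
  ⟨⟨(u.1 : ℕ) - 1, Nat.lt_of_le_of_lt (Nat.sub_le _ 1) u.1.isLt⟩,
   ⟨(u.2 : ℕ) / 2, by
      have h1 : (u.2 : ℕ) < 2 ^ (u.1 : ℕ) := u.2.isLt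
      have h2 : 2 ^ ((u.1 : ℕ) - 1) * 2 = 2 ^ (u.1 : ℕ) := by
        rw [← pow_succ]; congr 1; omega
      show (u.2 : ℕ) / 2 < 2 ^ ((u.1 : ℕ) - 1)
      exact Nat.div_lt_of_lt_mul (by omega)⟩⟩

/-!
Let `μ(u,v)` (`approxDist`) be the least length `(ℓ u - m) + (ℓ v - m) + g` of a path that
climbs from `u` to a level `m`, walks `g` steps around the ring there (`g` being the ring distance
of the level-`m` ancestors) and climbs down to `v`. Since `G` contains `RT(k)`, `d ≤ μ`.
Conversely, an edge of `G` moves the level-`m` ancestors of its ends by at most `F` ring steps,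
and ring distances at most halve from one level to the one above; so cutting a geodesic at its
lowest vertex and rising `L = ⌈log₂ F⌉` further levels gives `μ ≤ d + 2L + 1`. Finally, at
a minimising level the ancestor gap can be taken `≤ 3`, so the products `ℓ u + ℓ v - μ(u,v)`
are ultrametric up to `6`: this is Gromov's four-point condition for `μ` with constant `12`, hence
for `d` with constant `12 + 2(2L + 1)`.
-/

lemma cycDist_self (N a : ℕ) : cycDist N a a = 0 := by simp [cycDist]

lemma cycDist_comm (N a b : ℕ) : cycDist N a b = cycDist N b a := by
  rw [cycDist, cycDist, Nat.dist_comm]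

lemma cycDist_triangle {N a b c : ℕ} (ha : a < N) (hb : b < N) (hc : c < N) :
    cycDist N a b ≤ cycDist N a c + cycDist N c b := by
  simp only [cycDist, Nat.dist]; omega

lemma two_mul_cycDist_div_two_le {M a b : ℕ} (ha : a < 2 * M) (hb : b < 2 * M) :
    2 * cycDist M (a / 2) (b / 2) ≤ cycDist (2 * M) a b + 1 := by
  simp only [cycDist, Nat.dist]; omega

lemma cycDist_succ_mod_le_one {N a : ℕ} (ha : a < N) : cycDist N a ((a + 1) % N) ≤ 1 := by
  rcases Nat.lt_or_ge (a + 1) N with h | h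
  · rw [Nat.mod_eq_of_lt h]; simp only [cycDist, Nat.dist]; omega
  · rw [show a + 1 = N by omega, Nat.mod_self]; simp only [cycDist, Nat.dist]; omega

def FourPointCondition {α : Type*} (d : α → α → ℤ) (K : ℤ) : Prop :=
  ∀ u v w x, d u v + d w x ≤ max (d u x + d v w) (d u w + d v x) + K

/-- Gromov's lemma, with `(h u + h v - d u v) / 2` in the role of the Gromov product based at a
point at height `h`. -/
lemma fourPointCondition_of_gromovProduct {α : Type*} {d : α → α → ℤ} (h : α → ℤ)
    {D : ℤ} (hsymm : ∀ u v, d u v = d v u)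
    (hprod : ∀ u v x, min (h u + h x - d u x) (h x + h v - d x v) - D ≤ h u + h v - d u v) :
    FourPointCondition d (2 * D) := by
  intro u v w x
  have := hprod u v x
  have := hprod u v w
  have := hprod w x u
  have := hprod w x v
  have := hsymm w u
  have := hsymm x v
  have := hsymm w v
  omega

lemma FourPointCondition.of_le_of_le_add {α : Type*} {d d' : α → α → ℤ} {K E : ℤ}
    (h : FourPointCondition d K) (hle : ∀ u v, d' u v ≤ d u v)
    (hle' : ∀ u v, d u v ≤ d' u v + E) :
    FourPointCondition d' (K + 2 * E) := by
  intro u v w x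
  have := h u v w x
  have := hle u v
  have := hle w x
  have := hle' u x
  have := hle' v w
  have := hle' u w
  have := hle' v x
  omega

lemma deltaFour_le_of_fourPointCondition {V : Type*} {G : SimpleGraph V} {K : ℤ}
    (h : FourPointCondition (fun u v => (G.dist u v : ℤ)) K) (u v w x : V) :
    deltaFour G u v w x ≤ K / 2 := by
  have h₁ := h u v w x
  have h₂ := h u x v w
  have h₃ := h u w x v
  simp only [G.dist_comm (u := x), G.dist_comm (u := w) (v := v)] at h₁ h₂ h₃
  set a : ℤ := G.dist u v + G.dist w x
  set b : ℤ := G.dist u x + G.dist v w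
  set c : ℤ := G.dist u w + G.dist v x
  have key : 2 * max a (max b c) + min a (min b c) - (a + b + c) ≤ K := by omega
  have hcast : ((2 * max a (max b c) + min a (min b c) - (a + b + c) : ℤ) : ℝ) ≤ K := by
    exact_mod_cast key
  simp only [deltaFour]
  push_cast [a, b, c] at hcast
  linarith

lemma hyperbolicity_le {V : Type*} {G : SimpleGraph V} {c : ℝ} (hc : 0 ≤ c)
    (h : ∀ u v w x, deltaFour G u v w x ≤ c) : hyperbolicity G ≤ c :=
  Real.iSup_le (fun u => Real.iSup_le (fun v => Real.iSup_le (fun w =>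
    Real.iSup_le (h u v w) hc) hc) hc) hc

lemma SimpleGraph.Walk.apply_le_mul_length {α : Type*} {G : SimpleGraph α} {S : Set α}
    {f : α → α → ℕ} {F : ℕ} (hself : ∀ a, f a a = 0)
    (htri : ∀ a ∈ S, ∀ b ∈ S, ∀ c ∈ S, f a c ≤ f a b + f b c)
    (hadj : ∀ a ∈ S, ∀ b ∈ S, G.Adj a b → f a b ≤ F) {p q : α} (w : G.Walk p q)
    (hw : ∀ z ∈ w.support, z ∈ S) : f p q ≤ F * w.length := by
  induction w with
  | nil => simp [hself]
  | @cons p r q hpr w ih =>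
    have hp : p ∈ S := hw p (by simp)
    have hr : r ∈ S := hw r (by simp)
    have hq : q ∈ S := hw q (by simp)
    calc f p q ≤ f p r + f r q := htri p hp r hr q hq
      _ ≤ F + F * w.length := add_le_add (hadj p hp r hr hpr) (ih fun z hz => hw z (by simp [hz]))
      _ = F * (w.cons hpr).length := by rw [SimpleGraph.Walk.length_cons]; ring

namespace RTV

variable {k : ℕ}

abbrev level (u : RTV k) : ℕ := u.1

abbrev pos (u : RTV k) : ℕ := u.2

lemma pos_lt (u : RTV k) : u.pos < 2 ^ u.level := u.2.isLt

lemma ext_level_pos {u v : RTV k} (h₁ : u.level = v.level) (h₂ : u.pos = v.pos) : u = v := by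
  obtain ⟨⟨i, hi⟩, ⟨a, ha⟩⟩ := u
  obtain ⟨⟨j, hj⟩, ⟨b, hb⟩⟩ := v
  simp only [level, pos] at h₁ h₂
  subst h₁ h₂
  rfl

/-- Position of the level-`m` ancestor of `u`; for `m > u.level` it is junk (`u.pos`). -/
def ancestorPos (m : ℕ) (u : RTV k) : ℕ := u.pos / 2 ^ (u.level - m)

lemma ancestorPos_lt (u : RTV k) {m : ℕ} (h : m ≤ u.level) : u.ancestorPos m < 2 ^ m := by
  have hsplit : 2 ^ u.level = 2 ^ (u.level - m) * 2 ^ m := by rw [← pow_add]; congr 1; omega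
  exact Nat.div_lt_of_lt_mul (hsplit ▸ u.pos_lt)

lemma ancestorPos_self (u : RTV k) : u.ancestorPos u.level = u.pos := by simp [ancestorPos]

lemma ancestorPos_eq_div_two (u : RTV k) {m : ℕ} (h : m + 1 ≤ u.level) :
    u.ancestorPos m = u.ancestorPos (m + 1) / 2 := by
  rw [ancestorPos, ancestorPos, Nat.div_div_eq_div_mul, ← pow_succ]
  congr 2
  omega

lemma ancestorPos_eq_of_parent {p q : RTV k} (h₁ : p.level + 1 = q.level)
    (h₂ : q.pos / 2 = p.pos) {m : ℕ} (hm : m ≤ p.level) :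
    q.ancestorPos m = p.ancestorPos m := by
  rw [ancestorPos, ancestorPos, ← h₁, ← h₂, Nat.div_div_eq_div_mul, ← pow_succ']
  congr 2
  omega

def levelGap (m : ℕ) (u v : RTV k) : ℕ := cycDist (2 ^ m) (u.ancestorPos m) (v.ancestorPos m)

lemma levelGap_self (m : ℕ) (u : RTV k) : levelGap m u u = 0 := cycDist_self _ _

lemma levelGap_comm (m : ℕ) (u v : RTV k) : levelGap m u v = levelGap m v u := cycDist_comm _ _ _

lemma levelGap_zero (u v : RTV k) : levelGap 0 u v = 0 := by
  have hu := u.ancestorPos_lt (Nat.zero_le _)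
  have hv := v.ancestorPos_lt (Nat.zero_le _)
  rw [levelGap, show u.ancestorPos 0 = v.ancestorPos 0 by omega, cycDist_self]

lemma levelGap_triangle {m : ℕ} {u v x : RTV k} (hu : m ≤ u.level) (hv : m ≤ v.level)
    (hx : m ≤ x.level) : levelGap m u v ≤ levelGap m u x + levelGap m x v :=
  cycDist_triangle (u.ancestorPos_lt hu) (v.ancestorPos_lt hv) (x.ancestorPos_lt hx)

lemma two_mul_levelGap_le {m : ℕ} {u v : RTV k} (hu : m + 1 ≤ u.level)
    (hv : m + 1 ≤ v.level) :
    2 * levelGap m u v ≤ levelGap (m + 1) u v + 1 := by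
  have h := two_mul_cycDist_div_two_le (M := 2 ^ m)
    (pow_succ' 2 m ▸ u.ancestorPos_lt hu) (pow_succ' 2 m ▸ v.ancestorPos_lt hv)
  rwa [← u.ancestorPos_eq_div_two hu, ← v.ancestorPos_eq_div_two hv, ← pow_succ'] at h

lemma levelGap_mono {m m' : ℕ} {u v : RTV k} (h : m ≤ m') (hu : m' ≤ u.level)
    (hv : m' ≤ v.level) : levelGap m u v ≤ levelGap m' u v := by
  induction m', h using Nat.le_induction with
  | base => rfl
  | succ n _ ih =>
    have := two_mul_levelGap_le hu hv
    have := ih (by omega) (by omega)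
    omega

lemma levelGap_mul_pow_add_one_le {m t : ℕ} {u v : RTV k} (hu : m + t ≤ u.level)
    (hv : m + t ≤ v.level) : levelGap m u v * 2 ^ t + 1 ≤ levelGap (m + t) u v + 2 ^ t := by
  induction t with
  | zero => simp
  | succ t ih =>
    have := ih (by omega) (by omega)
    have := two_mul_levelGap_le (m := m + t) (by omega : m + t + 1 ≤ u.level) (by omega)
    rw [pow_succ, ← add_assoc]
    nlinarith

lemma levelGap_le_rtRingDist {m : ℕ} {u v : RTV k} (h : u.level = v.level) (hm : m ≤ u.level) :
    levelGap m u v ≤ rtRingDist u v := by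
  have hself : levelGap u.level u v = rtRingDist u v := by
    have h' : v.level - u.level = 0 := by omega
    simp only [levelGap, ancestorPos, Nat.sub_self, h', pow_zero, Nat.div_one]
    rfl
  exact hself ▸ levelGap_mono hm le_rfl h.le

lemma levelGap_eq_zero_of_treeAdj {m : ℕ} {u v : RTV k} (h : treeAdj u v) (hu : m ≤ u.level)
    (hv : m ≤ v.level) : levelGap m u v = 0 := by
  rcases h with ⟨h₁, h₂⟩ | ⟨h₁, h₂⟩
  · rw [levelGap, ancestorPos_eq_of_parent (p := u) (q := v) h₁ (by simp only [pos]; omega) hu,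
      cycDist_self]
  · rw [levelGap, ancestorPos_eq_of_parent (p := v) (q := u) h₁ (by simp only [pos]; omega) hv,
      cycDist_self]

/-- The length of the path from `u` up to level `m`, around the ring, and down to `v`. -/
def pathLengthVia (m : ℕ) (u v : RTV k) : ℕ := (u.level - m) + (v.level - m) + levelGap m u v

lemma pathLengthVia_comm (m : ℕ) (u v : RTV k) : pathLengthVia m u v = pathLengthVia m v u := by
  rw [pathLengthVia, pathLengthVia, levelGap_comm]; ring

def approxDist (u v : RTV k) : ℕ :=
  (Finset.range (min u.level v.level + 1)).inf' Finset.nonempty_range_add_one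
    (pathLengthVia · u v)

lemma approxDist_le_pathLengthVia {u v : RTV k} {m : ℕ} (h : m ≤ min u.level v.level) :
    approxDist u v ≤ pathLengthVia m u v :=
  Finset.inf'_le _ (Finset.mem_range.mpr (by omega))

lemma exists_pathLengthVia_eq_approxDist (u v : RTV k) :
    ∃ m ≤ min u.level v.level, pathLengthVia m u v = approxDist u v := by
  obtain ⟨m, hm, h⟩ :=
    Finset.exists_mem_eq_inf' Finset.nonempty_range_add_one (pathLengthVia · u v)
  exact ⟨m, Nat.lt_succ_iff.mp (Finset.mem_range.mp hm), h.symm⟩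

lemma approxDist_le_level_add_level (u v : RTV k) : approxDist u v ≤ u.level + v.level := by
  simpa [pathLengthVia, levelGap_zero] using approxDist_le_pathLengthVia (u := u) (v := v)
    (Nat.zero_le _)

lemma approxDist_comm (u v : RTV k) : approxDist u v = approxDist v u := by
  simp only [approxDist, pathLengthVia_comm _ u, min_comm u.level]

/-- The smallest minimising level `m` has ancestor gap at most `3`: otherwise the gap at level
`m - 1`, at most half of it plus one, would make the path via `m - 1` no longer. -/
lemma exists_pathLengthVia_eq_approxDist_levelGap_le (u v : RTV k) :
    ∃ m ≤ min u.level v.level,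
      pathLengthVia m u v = approxDist u v ∧ levelGap m u v ≤ 3 := by
  classical
  have hex := exists_pathLengthVia_eq_approxDist u v
  obtain ⟨hm, heq⟩ := Nat.find_spec hex
  refine ⟨Nat.find hex, hm, heq, ?_⟩
  rcases Nat.eq_zero_or_pos (Nat.find hex) with h0 | hpos
  · rw [h0, levelGap_zero]; omega
  · obtain ⟨n, hn⟩ : ∃ n, Nat.find hex = n + 1 := ⟨Nat.find hex - 1, by omega⟩
    have hlt : ¬ pathLengthVia n u v = approxDist u v :=
      fun h => Nat.find_min hex (by omega : n < Nat.find hex) ⟨by omega, h⟩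
    have hge := approxDist_le_pathLengthVia (u := u) (v := v) (m := n) (by omega)
    have hgap := two_mul_levelGap_le (m := n) (u := u) (v := v) (by omega) (by omega)
    rw [hn] at hm heq ⊢
    simp only [pathLengthVia] at hlt hge heq
    omega

lemma gromovProduct_approxDist_ge_min (u v x : RTV k) :
    min ((u.level : ℤ) + x.level - approxDist u x)
        ((x.level : ℤ) + v.level - approxDist x v) - 6
      ≤ (u.level : ℤ) + v.level - approxDist u v := by
  obtain ⟨a, ha, hpa, hga⟩ := exists_pathLengthVia_eq_approxDist_levelGap_le u x
  obtain ⟨b, hb, hpb, hgb⟩ := exists_pathLengthVia_eq_approxDist_levelGap_le x v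
  have huv := approxDist_le_pathLengthVia (u := u) (v := v) (m := min a b) (by omega)
  have htri := levelGap_triangle (m := min a b) (u := u) (v := v) (x := x)
    (by omega) (by omega) (by omega)
  have hmono₁ := levelGap_mono (u := u) (v := x) (min_le_left a b) (by omega) (by omega)
  have hmono₂ := levelGap_mono (u := x) (v := v) (min_le_right a b) (by omega) (by omega)
  simp only [pathLengthVia] at huv hpa hpb
  omega

lemma fourPointCondition_approxDist :
    FourPointCondition (fun u v : RTV k => (approxDist u v : ℤ)) 12 :=
  fourPointCondition_of_gromovProduct (D := 6) (fun u => (u.level : ℤ))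
    (fun u v => by rw [approxDist_comm]) gromovProduct_approxDist_ge_min

end RTV

open RTV

namespace ringedTree

variable {k : ℕ}

lemma adj_rtParent (u : RTV k) (h : 1 ≤ u.level) : (ringedTree k).Adj u (rtParent u h) :=
  Or.inl (Or.inr
    ⟨by simp only [rtParent, level] at h ⊢; omega, by simp only [rtParent]; omega⟩)

lemma exists_walk_to_ancestor {m : ℕ} (u : RTV k) (hm : m ≤ u.level) :
    ∃ (z : RTV k) (w : (ringedTree k).Walk u z),
      z.level = m ∧ z.pos = u.ancestorPos m ∧ w.length = u.level - m := by
  obtain ⟨d, hd⟩ : ∃ d, u.level - m = d := ⟨_, rfl⟩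
  induction d generalizing u with
  | zero =>
    have hum : u.level = m := by omega
    exact ⟨u, .nil, hum, by rw [← hum, ancestorPos_self], by simp [hd]⟩
  | succ d ih =>
    have h₁ : 1 ≤ u.level := by omega
    obtain ⟨p, hp₁, hp₂, hadj⟩ : ∃ p : RTV k,
        p.level + 1 = u.level ∧ u.pos / 2 = p.pos ∧ (ringedTree k).Adj u p :=
      ⟨rtParent u h₁, by simp only [rtParent, level] at h₁ ⊢; omega, rfl,
        adj_rtParent u h₁⟩
    obtain ⟨z, w, hz, hzpos, hw⟩ := ih p (by omega) (by omega)
    refine ⟨z, .cons hadj w, hz, ?_, by simp only [SimpleGraph.Walk.length_cons]; omega⟩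
    rw [hzpos, ancestorPos_eq_of_parent hp₁ hp₂ (by omega)]

lemma exists_walk_ring_forward {u : RTV k} (j : ℕ) {v : RTV k} (hl : u.level = v.level)
    (hp : v.pos = (u.pos + j) % 2 ^ u.level) :
    ∃ w : (ringedTree k).Walk u v, w.length ≤ j := by
  induction j generalizing v with
  | zero =>
    rw [add_zero, Nat.mod_eq_of_lt u.pos_lt] at hp
    obtain rfl := ext_level_pos hl hp.symm
    exact ⟨.nil, le_rfl⟩
  | succ j ih =>
    by_cases h0 : u.level = 0
    · have hu := u.pos_lt
      have hv := v.pos_lt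
      rw [h0, pow_zero] at hu
      rw [← hl, h0, pow_zero] at hv
      obtain rfl := ext_level_pos hl (by omega)
      exact ⟨.nil, Nat.zero_le _⟩
    · let v' : RTV k := ⟨u.1, ⟨(u.pos + j) % 2 ^ u.level, Nat.mod_lt _ (by positivity)⟩⟩
      obtain ⟨w, hw⟩ := ih (v := v') rfl rfl
      have hadj : (ringedTree k).Adj v' v :=
        Or.inr ⟨hl, Nat.one_le_iff_ne_zero.mpr h0,
          Or.inl (by simp only [v']; rw [Nat.mod_add_mod]; exact hp)⟩
      exact ⟨w.concat hadj, by rw [SimpleGraph.Walk.length_concat]; omega⟩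

lemma exists_walk_length_le_rtRingDist {u v : RTV k} (h : u.level = v.level) :
    ∃ w : (ringedTree k).Walk u v, w.length ≤ rtRingDist u v := by
  wlog huv : u.pos ≤ v.pos generalizing u v
  · obtain ⟨w, hw⟩ := this h.symm (by omega)
    refine ⟨w.reverse, ?_⟩
    rw [SimpleGraph.Walk.length_reverse]
    simpa only [rtRingDist, ← h, cycDist_comm _ v.pos] using hw
  have hu := u.pos_lt
  have hv := v.pos_lt
  rw [← h] at hv
  have hdist : rtRingDist u v = min (v.pos - u.pos) (2 ^ u.level - (v.pos - u.pos)) := by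
    show min (Nat.dist u.pos v.pos) (2 ^ u.level - Nat.dist u.pos v.pos) = _
    rw [Nat.dist_eq_sub_of_le huv]
  rw [hdist]
  rcases le_total (v.pos - u.pos) (2 ^ u.level - (v.pos - u.pos)) with hle | hle
  · obtain ⟨w, hw⟩ := exists_walk_ring_forward (v.pos - u.pos) h
      (by rw [Nat.add_sub_cancel' huv, Nat.mod_eq_of_lt hv])
    exact ⟨w, hw.trans (le_min le_rfl hle)⟩
  · obtain ⟨w, hw⟩ := exists_walk_ring_forward (u := v) (2 ^ u.level - (v.pos - u.pos)) h.symm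
      (by rw [← h, show v.pos + (2 ^ u.level - (v.pos - u.pos)) = u.pos + 2 ^ u.level by omega,
        Nat.add_mod_right, Nat.mod_eq_of_lt hu])
    refine ⟨w.reverse, ?_⟩
    rw [SimpleGraph.Walk.length_reverse]
    exact hw.trans (le_min hle le_rfl)

lemma exists_walk_length_le_pathLengthVia {u v : RTV k} {m : ℕ} (hu : m ≤ u.level)
    (hv : m ≤ v.level) : ∃ w : (ringedTree k).Walk u v, w.length ≤ pathLengthVia m u v := by
  obtain ⟨a, wa, ha, hpa, hla⟩ := exists_walk_to_ancestor u hu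
  obtain ⟨b, wb, hb, hpb, hlb⟩ := exists_walk_to_ancestor v hv
  obtain ⟨wab, hab⟩ := exists_walk_length_le_rtRingDist (ha.trans hb.symm)
  have hring : rtRingDist a b = levelGap m u v := by
    simp only [rtRingDist, levelGap, ← hpa, ← hpb]
    rw [← ha]
  refine ⟨(wa.append wab).append wb.reverse, ?_⟩
  simp only [SimpleGraph.Walk.length_append, SimpleGraph.Walk.length_reverse, pathLengthVia]
  omega

lemma reachable (u v : RTV k) : (ringedTree k).Reachable u v :=
  (exists_walk_length_le_pathLengthVia (Nat.zero_le u.level) (Nat.zero_le v.level)).elim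
    fun w _ => w.reachable

end ringedTree

section Supergraph

variable {k : ℕ} {G : SimpleGraph (RTV k)}

lemma dist_le_approxDist (hle : ringedTree k ≤ G) (u v : RTV k) :
    G.dist u v ≤ approxDist u v := by
  obtain ⟨m, hm, heq⟩ := exists_pathLengthVia_eq_approxDist u v
  obtain ⟨w, hw⟩ := ringedTree.exists_walk_length_le_pathLengthVia (u := u) (v := v)
    (by omega : m ≤ u.level) (by omega)
  calc G.dist u v ≤ (w.mapLe hle).length := SimpleGraph.dist_le _
    _ = w.length := SimpleGraph.Walk.length_mapLe _ _
    _ ≤ approxDist u v := heq ▸ hw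

def ExtraEdgesWithin (G : SimpleGraph (RTV k)) (F : ℕ) : Prop :=
  ∀ u v : RTV k, G.Adj u v → ¬ (ringedTree k).Adj u v →
    (u.1 : ℕ) = (v.1 : ℕ) ∧ rtRingDist u v ≤ F

namespace ExtraEdgesWithin

variable {F : ℕ}

lemma mono {F' : ℕ} (hG : ExtraEdgesWithin G F) (hF : F ≤ F') : ExtraEdgesWithin G F' :=
  fun u v hadj hnot => (hG u v hadj hnot).imp_right (·.trans hF)

lemma mul_dist_level_add_levelGap_le (hG : ExtraEdgesWithin G F) (hF : 1 ≤ F) {p q : RTV k}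
    (hadj : G.Adj p q) {m : ℕ} (hp : m ≤ p.level) (hq : m ≤ q.level) :
    F * Nat.dist p.level q.level + levelGap m p q ≤ F := by
  by_cases hrt : (ringedTree k).Adj p q
  · rcases hrt with htree | ⟨hl, -, hring⟩
    · have hdist : Nat.dist p.level q.level = 1 := by
        rcases htree with ⟨h, _⟩ | ⟨h, _⟩ <;> simp only [Nat.dist, level] <;> omega
      rw [hdist, levelGap_eq_zero_of_treeAdj htree hp hq]; omega
    · have hgap : rtRingDist p q ≤ 1 := by
        rcases hring with h | h
        · unfold rtRingDist
          rw [h]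
          exact cycDist_succ_mod_le_one p.2.isLt
        · unfold rtRingDist
          rw [cycDist_comm, h, hl]
          exact cycDist_succ_mod_le_one q.2.isLt
      have := levelGap_le_rtRingDist hl hp
      rw [Nat.dist_eq_sub_of_le hl.le, Nat.sub_eq_zero_of_le hl.ge]; omega
  · obtain ⟨hl, hd⟩ := hG p q hadj hrt
    have := levelGap_le_rtRingDist hl hp
    rw [Nat.dist_eq_sub_of_le hl.le, Nat.sub_eq_zero_of_le hl.ge]; omega

lemma mul_dist_level_add_levelGap_le_mul_length (hG : ExtraEdgesWithin G F) (hF : 1 ≤ F)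
    {m : ℕ} {p q : RTV k} (w : G.Walk p q) (hw : ∀ y ∈ w.support, m ≤ y.level) :
    F * Nat.dist p.level q.level + levelGap m p q ≤ F * w.length :=
  w.apply_le_mul_length (S := {y | m ≤ y.level})
    (f := fun p q => F * Nat.dist p.level q.level + levelGap m p q)
    (fun a => by simp [levelGap_self])
    (fun a ha b hb c hc => by
      have := Nat.mul_le_mul_left F (Nat.dist.triangle_inequality a.level b.level c.level)
      have := levelGap_triangle (v := c) ha hc hb
      rw [mul_add] at *
      omega)
    (fun a ha b hb hab => hG.mul_dist_level_add_levelGap_le hF hab ha hb) hw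

/-- Cut a geodesic at its lowest vertex, of level `m`: both halves stay at levels `≥ m`. -/
lemma exists_mul_add_levelGap_le_mul_dist (hG : ExtraEdgesWithin G F) (hF : 1 ≤ F)
    {u v : RTV k} (h : G.Reachable u v) : ∃ m ≤ min u.level v.level,
      F * ((u.level - m) + (v.level - m)) + levelGap m u v ≤ F * G.dist u v := by
  classical
  obtain ⟨w, hw⟩ := h.exists_walk_length_eq_dist
  obtain ⟨z, hz, hzmin⟩ := w.support.toFinset.exists_min_image RTV.level ⟨u, by simp⟩
  rw [List.mem_toFinset] at hz
  have hmin : ∀ y ∈ w.support, z.level ≤ y.level :=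
    fun y hy => hzmin y (List.mem_toFinset.mpr hy)
  have hu := hmin u w.start_mem_support
  have hv := hmin v w.end_mem_support
  have h₁ := hG.mul_dist_level_add_levelGap_le_mul_length hF (w.takeUntil z hz)
    fun y hy => hmin y (w.support_takeUntil_subset_support hz hy)
  have h₂ := hG.mul_dist_level_add_levelGap_le_mul_length hF (w.dropUntil z hz)
    fun y hy => hmin y (w.support_dropUntil_subset_support hz hy)
  have hlen : (w.takeUntil z hz).length + (w.dropUntil z hz).length = G.dist u v := by
    rw [← SimpleGraph.Walk.length_append, w.take_spec hz, hw]
  have htri := levelGap_triangle hu hv (le_refl z.level)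
  rw [Nat.dist_eq_sub_of_le_right hu] at h₁
  rw [Nat.dist_eq_sub_of_le hv] at h₂
  refine ⟨z.level, le_min hu hv, ?_⟩
  rw [← hlen, mul_add, mul_add]
  omega

end ExtraEdgesWithin

/-- Descending `L` levels from `m` shrinks the ancestor gap by the factor `2 ^ L`, at the cost of
`2 L` tree edges. -/
lemma approxDist_le_of_pow_mul_le {u v : RTV k} {L D m : ℕ} (hm : m ≤ min u.level v.level)
    (h : 2 ^ L * ((u.level - m) + (v.level - m)) + levelGap m u v ≤ 2 ^ L * D) :
    approxDist u v ≤ D + 2 * L + 1 := by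
  have hpos : 0 < 2 ^ L := by positivity
  by_cases hL : L ≤ m
  · have hvia := approxDist_le_pathLengthVia (u := u) (v := v) (m := m - L) (by omega)
    have hgap := levelGap_mul_pow_add_one_le (m := m - L) (t := L) (u := u) (v := v)
      (by omega) (by omega)
    rw [Nat.sub_add_cancel hL] at hgap
    replace hvia :
        approxDist u v ≤ (u.level - m) + (v.level - m) + 2 * L + levelGap (m - L) u v := by
      simp only [pathLengthVia] at hvia; omega
    refine Nat.le_of_mul_le_mul_left ?_ hpos
    have := Nat.mul_le_mul_left (2 ^ L) hvia
    nlinarith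
  · have hsum : (u.level - m) + (v.level - m) ≤ D :=
      Nat.le_of_mul_le_mul_left (by omega) hpos
    have := approxDist_le_level_add_level u v
    omega

lemma ExtraEdgesWithin.approxDist_le_dist_add {L : ℕ} (hG : ExtraEdgesWithin G (2 ^ L))
    {u v : RTV k} (h : G.Reachable u v) : approxDist u v ≤ G.dist u v + 2 * L + 1 := by
  obtain ⟨m, hm, hle⟩ := hG.exists_mul_add_levelGap_le_mul_dist Nat.one_le_two_pow h
  exact approxDist_le_of_pow_mul_le hm hle

lemma deltaFour_le_of_extraEdgesWithin {L : ℕ} (hle : ringedTree k ≤ G)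
    (hG : ExtraEdgesWithin G (2 ^ L)) (u v w x : RTV k) :
    deltaFour G u v w x ≤ 2 * L + 7 := by
  have h := fourPointCondition_approxDist.of_le_of_le_add (d' := fun u v => (G.dist u v : ℤ))
    (E := 2 * L + 1) (fun u v => by exact_mod_cast dist_le_approxDist hle u v)
    (fun u v => by exact_mod_cast hG.approxDist_le_dist_add ((ringedTree.reachable u v).mono hle))
  have := deltaFour_le_of_fourPointCondition h u v w x
  push_cast at this
  linarith

end Supergraph

lemma clog_two_le_three_mul_max_one_log (F : ℕ) :
    (Nat.clog 2 F : ℝ) ≤ 3 * max 1 (Real.log F) := by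
  have hlog := Real.log_natCast_nonneg F
  have hlogb : 0 ≤ Real.logb 2 F := div_nonneg hlog (Real.log_nonneg one_le_two)
  have hceil := Nat.ceil_lt_add_one hlogb
  rw [show ⌈Real.logb 2 F⌉₊ = Nat.clog 2 F by exact_mod_cast Real.natCeil_logb_natCast 2 F]
    at hceil
  have hlogb_le : Real.logb 2 F ≤ 2 * Real.log F := by
    rw [Real.logb, div_le_iff₀ (Real.log_pos one_lt_two)]
    nlinarith [Real.log_two_gt_d9]
  linarith [le_max_left 1 (Real.log F), le_max_right 1 (Real.log F)]

/-- There is a universal constant `c` such that: for every `k ≥ 1`, every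
function `f` from positive integers to positive integers, and every graph `G` obtained from
the ringed tree `RT(k)` (with `n = 2^k - 1` vertices) by adding extra edges, each joining two
vertices `u, v` at the same level with `d_R(u,v) ≤ f(n)`, one has
`δ(G) ≤ c · max(1, log f(n))`. -/
theorem ringedTree_bounded_jumps_hyperbolicity :
    ∃ c : ℝ, 0 < c ∧
      ∀ (k : ℕ), 0 < k →
        ∀ (f : ℕ → ℕ), (∀ m, 0 < f m) →
          ∀ G : SimpleGraph (RTV k),
            ringedTree k ≤ G →
            (∀ u v : RTV k, G.Adj u v → ¬ (ringedTree k).Adj u v →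
              (u.1 : ℕ) = (v.1 : ℕ) ∧ rtRingDist u v ≤ f (2 ^ k - 1)) →
            hyperbolicity G ≤ c * max 1 (Real.log ((f (2 ^ k - 1) : ℕ) : ℝ)) := by
  refine ⟨13, by norm_num, fun k _ f _ G hle hG => ?_⟩
  set F := f (2 ^ k - 1)
  have hG' : ExtraEdgesWithin G (2 ^ Nat.clog 2 F) :=
    ExtraEdgesWithin.mono hG (Nat.le_pow_clog one_lt_two F)
  have hM : (1 : ℝ) ≤ max 1 (Real.log F) := le_max_left _ _
  have hclog := clog_two_le_three_mul_max_one_log F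
  refine hyperbolicity_le (by linarith) fun u v w x => ?_
  have := deltaFour_le_of_extraEdgesWithin hle hG' u v w x
  linarith
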